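/- arXiv:1508.04315 — 8 statements merged into one kernel-verified Lean document; each statement's English description precedes it below -/
import Mathlib

section
/- The double series ∑_{n₁=1}^∞ ∑_{n₂=1}^∞ (n₁·n₂)/(n₁+n₂)! equals (2/3)·e. -/
/-!
Grouping the terms by `n = n₁ + n₂` (those with `n₁ = 0` or `n₂ = 0` vanish, so `ℕ+` may be
replaced by `ℕ`), the `n`-th group is `(∑_{i+j=n} i j) / n! = C(n+1, 3) / n!`.
Since `C(n+1, 3) = C(n, 2) + C(n, 3)` and `∑ₙ C(n, k) / n! = e / k!`, the sum is `e/2 + e/6 = 2e/3`;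
positivity of the terms justifies the regrouping.
-/

open Finset Nat

theorem Finset.Nat.sum_antidiagonal_choose_mul_choose (a : ℕ) :
    ∀ n b : ℕ, ∑ ij ∈ antidiagonal n, ij.1.choose a * ij.2.choose b = (n + 1).choose (a + b + 1)
  | 0, b => by
    rcases a with _ | a <;> rcases b with _ | b <;> simp [Nat.choose_eq_zero_of_lt]
  | n + 1, 0 => by
    have ih := Finset.Nat.sum_antidiagonal_choose_mul_choose a n 0
    simp only [choose_zero_right, mul_one, add_zero] at ih ⊢
    rw [Nat.sum_antidiagonal_succ', ih, Nat.choose_succ_succ' (n + 1)]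
  | n + 1, b + 1 => by
    rw [Nat.sum_antidiagonal_succ', choose_zero_succ, mul_zero, zero_add]
    simp only [choose_succ_succ' _ b, mul_add, sum_add_distrib,
      Finset.Nat.sum_antidiagonal_choose_mul_choose a n]
    rw [← add_assoc a b 1, choose_succ_succ' (n + 1) (a + b + 1)]

open Real in
theorem Real.hasSum_choose_mul_pow_div_factorial (k : ℕ) (x : ℝ) :
    HasSum (fun n => (n.choose k : ℝ) * x ^ n / n !) (x ^ k / k ! * exp x) := by
  rw [← hasSum_nat_add_iff' k]
  have hvanish : ∑ i ∈ range k, (i.choose k : ℝ) * x ^ i / i ! = 0 :=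
    sum_eq_zero fun i hi => by simp [Nat.choose_eq_zero_of_lt (mem_range.mp hi)]
  have hshift (n : ℕ) :
      ((n + k).choose k : ℝ) * x ^ (n + k) / (n + k)! = x ^ k / k ! * (x ^ n / n !) := by
    rw [← Nat.add_choose_mul_factorial_mul_factorial n k]
    have : ((n + k).choose k : ℝ) ≠ 0 := mod_cast (Nat.choose_pos (Nat.le_add_left k n)).ne'
    push_cast
    field_simp
    ring
  simpa [hvanish, hshift, Real.exp_eq_exp_ℝ] using
    (NormedSpace.expSeries_div_hasSum_exp x).mul_left (x ^ k / k !)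

theorem hasSum_of_hasSum_sum_antidiagonal_of_nonneg {A : Type*} [AddCommMonoid A]
    [HasAntidiagonal A] {f : A × A → ℝ} (hf : 0 ≤ f) {a : ℝ}
    (h : HasSum (fun n => ∑ p ∈ antidiagonal n, f p) a) : HasSum f a := by
  let e := HasAntidiagonal.sigmaAntidiagonalEquivProd (A := A)
  have hfiber (n : A) :
      HasSum (fun p : antidiagonal n => f (e ⟨n, p⟩)) (∑ p ∈ antidiagonal n, f p) :=
    (antidiagonal n).hasSum f
  have hsum : Summable (f ∘ e) :=
    (summable_sigma_of_nonneg fun _ => hf _).2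
      ⟨fun n => (hfiber n).summable, by simpa only [(hfiber _).tsum_eq] using h.summable⟩
  rw [← e.hasSum_iff, h.unique (hsum.hasSum.sigma hfiber)]
  exact hsum.hasSum

theorem Finset.Nat.sum_antidiagonal_mul (n : ℕ) :
    ∑ ij ∈ antidiagonal n, ij.1 * ij.2 = (n + 1).choose 3 := by
  simpa using Finset.Nat.sum_antidiagonal_choose_mul_choose 1 n 1

theorem sum_antidiagonal_mul_div_factorial_add (n : ℕ) :
    ∑ ij ∈ antidiagonal n, (ij.1 * ij.2 : ℝ) / (ij.1 + ij.2)! = ((n + 1).choose 3 : ℝ) / n ! := by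
  rw [← Finset.Nat.sum_antidiagonal_mul, Nat.cast_sum, sum_div]
  refine sum_congr rfl fun ij hij => ?_
  rw [mem_antidiagonal.mp hij]
  norm_cast

open Real in
theorem hasSum_mul_div_factorial_add :
    HasSum (fun ij : ℕ × ℕ => (ij.1 * ij.2 : ℝ) / (ij.1 + ij.2)!) (2 / 3 * exp 1) := by
  refine hasSum_of_hasSum_sum_antidiagonal_of_nonneg (fun _ => by positivity) ?_
  simp only [sum_antidiagonal_mul_div_factorial_add, choose_succ_succ', Nat.cast_add, add_div]
  have hk (k : ℕ) : HasSum (fun n => (n.choose k : ℝ) / n !) ((k ! : ℝ)⁻¹ * exp 1) := by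
    simpa using Real.hasSum_choose_mul_pow_div_factorial k 1
  convert (hk 2).add (hk 3) using 1
  simp [Nat.factorial]
  ring

theorem stmt_1 :
    ∑' n₁ : ℕ+, ∑' n₂ : ℕ+,
      ((n₁ : ℝ) * n₂) / (Nat.factorial (n₁ + n₂ : ℕ)) = (2 / 3) * Real.exp 1 := by
  rw [← hasSum_mul_div_factorial_add.tsum_eq, hasSum_mul_div_factorial_add.summable.tsum_prod,
    tsum_pnat_eq_tsum_of_eq_zero (f := fun n₁ : ℕ => ∑' n₂ : ℕ+, ((n₁ : ℝ) * n₂) / (n₁ + n₂ : ℕ)!)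
      (by simp)]
  congr! with n₁
  exact tsum_pnat_eq_tsum_of_eq_zero (f := fun n₂ : ℕ => ((n₁ : ℝ) * n₂) / (n₁ + n₂ : ℕ)!) (by simp)
end

section
/- For every positive integer k, the multiple series S_k := ∑_{n₁=1}^∞ ⋯ ∑_{n_k=1}^∞ (n₁⋯n_k)/(n₁+⋯+n_k)! equals e · ∑_{i=0}^{k-1} C(k-1, i) / (2k-i-1)!, where C denotes the binomial coefficient. In particular S_k is a rational multiple of e. -/
/-!
Substituting `nᵢ = mᵢ + 1` and grouping the tuples `m` by `N = ∑ mᵢ`, the inner finite sum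
`∑ ∏ (mᵢ + 1)` is the coefficient of `X^N` in `(1 - X)^(-2k)`, i.e. `C(N + 2k - 1, 2k - 1)`.
Vandermonde's identity splits this binomial as `∑ᵢ C(k - 1, i) C(N + k, 2k - 1 - i)`, and
`∑_N C(N + k, r) / (N + k)! = e / r!` once `k ≤ r`. Summing in `ℝ≥0∞` makes every rearrangement
free of summability side conditions.
-/

open Finset Finset.Nat Nat

open scoped ENNReal

theorem Finset.Nat.sum_antidiagonalTuple_succ {M : Type*} [AddCommMonoid M] (k n : ℕ)
    (f : (Fin (k + 1) → ℕ) → M) :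
    ∑ x ∈ antidiagonalTuple (k + 1) n, f x
      = ∑ p ∈ antidiagonal n, ∑ x ∈ antidiagonalTuple k p.2, f (Fin.cons p.1 x) := by
  simp only [Finset.sum, antidiagonalTuple, Multiset.Nat.antidiagonalTuple,
    List.Nat.antidiagonalTuple, HasAntidiagonal.antidiagonal, Multiset.Nat.antidiagonal,
    Multiset.map_coe, Multiset.sum_coe, List.flatMap_def, List.map_flatten, List.sum_flatten,
    List.map_map, Function.comp_def]

open PowerSeries in
theorem Nat.sum_antidiagonal_add_choose_mul_add_choose (a b n : ℕ) :
    ∑ p ∈ antidiagonal n, (a + p.1).choose a * (b + p.2).choose b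
      = (a + b + 1 + n).choose (a + b + 1) := by
  have h := congrArg (fun f : (ℤ⟦X⟧)ˣ => coeff n (f : ℤ⟦X⟧)) (invOneSubPow_add ℤ (a + 1) (b + 1))
  simp only [Units.val_mul, invOneSubPow_val_succ_eq_mk_add_choose, coeff_mul, coeff_mk,
    show a + 1 + (b + 1) = (a + b + 1) + 1 by ring] at h
  exact_mod_cast h.symm

theorem Finset.Nat.sum_antidiagonalTuple_prod_add_choose (a k n : ℕ) :
    ∑ x ∈ antidiagonalTuple (k + 1) n, ∏ i, (a + x i).choose a
      = (k * (a + 1) + a + n).choose (k * (a + 1) + a) := by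
  induction k generalizing n with
  | zero => simp [antidiagonalTuple_one]
  | succ k ih =>
    rw [sum_antidiagonalTuple_succ]
    simp only [Fin.prod_univ_succ (n := k + 1), Fin.cons_zero, Fin.cons_succ, ← mul_sum, ih,
      Nat.sum_antidiagonal_add_choose_mul_add_choose]
    rw [show a + (k * (a + 1) + a) + 1 = (k + 1) * (a + 1) + a by ring]

theorem Nat.add_choose_eq_sum_range {m r : ℕ} (n : ℕ) (h : m ≤ r) :
    (m + n).choose r = ∑ i ∈ range (m + 1), m.choose i * n.choose (r - i) := by
  rw [add_choose_eq, sum_antidiagonal_eq_sum_range_succ_mk]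
  refine (sum_subset (range_subset_range.2 (by omega)) fun i _ hi => ?_).symm
  rw [choose_eq_zero_of_lt (by simpa using hi), zero_mul]

namespace ENNReal

theorem tsum_eq_tsum_sum_antidiagonalTuple (k : ℕ) (f : (Fin k → ℕ) → ℝ≥0∞) :
    ∑' x, f x = ∑' n, ∑ x ∈ antidiagonalTuple k n, f x := by
  rw [← (sigmaAntidiagonalTupleEquivTuple k).tsum_eq, ENNReal.tsum_sigma']
  exact tsum_congr fun n => Finset.tsum_subtype (antidiagonalTuple k n) f

theorem tsum_inv_factorial : ∑' n : ℕ, (n ! : ℝ≥0∞)⁻¹ = ENNReal.ofReal (Real.exp 1) := by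
  have h : HasSum (fun n : ℕ => (n ! : ℝ)⁻¹) (Real.exp 1) := by
    simpa [Real.exp_eq_exp_ℝ] using NormedSpace.expSeries_div_hasSum_exp (1 : ℝ)
  rw [← h.tsum_eq, ENNReal.ofReal_tsum_of_nonneg (fun n => by positivity) h.summable]
  congr! with n
  rw [ENNReal.ofReal_inv_of_pos (by positivity), ENNReal.ofReal_natCast]

theorem add_choose_div_factorial (n r : ℕ) :
    ((n + r).choose r : ℝ≥0∞) / (n + r)! = (r ! : ℝ≥0∞)⁻¹ * (n ! : ℝ≥0∞)⁻¹ := by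
  rw [← ENNReal.mul_inv (by simp) (by simp), ← Nat.add_choose_mul_factorial_mul_factorial n r,
    mul_assoc, mul_comm (n ! : ℕ)]
  push_cast
  simpa using ENNReal.mul_div_mul_left 1 ((r ! : ℝ≥0∞) * n !)
    (by exact_mod_cast (Nat.choose_pos (Nat.le_add_left r n)).ne') (ENNReal.natCast_ne_top _)

theorem tsum_add_choose_div_factorial {a r : ℕ} (h : a ≤ r) :
    ∑' n, ((n + a).choose r : ℝ≥0∞) / (n + a)! = (r ! : ℝ≥0∞)⁻¹ * ENNReal.ofReal (Real.exp 1) := by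
  obtain ⟨d, rfl⟩ := Nat.exists_eq_add_of_le h
  rw [← ENNReal.summable.sum_add_tsum_nat_add' (k := d)]
  have hlow : ∀ i ∈ range d, ((i + a).choose (a + d) : ℝ≥0∞) / (i + a)! = 0 := fun i hi => by
    rw [choose_eq_zero_of_lt (by simp at hi; omega), Nat.cast_zero, ENNReal.zero_div]
  simp only [sum_eq_zero hlow, zero_add, add_assoc, add_comm d a, add_choose_div_factorial,
    ENNReal.tsum_mul_left, tsum_inv_factorial]

theorem tsum_prod_div_factorial_sum (k : ℕ) :
    ∑' n : Fin (k + 1) → ℕ+, (∏ i, ((n i : ℕ) : ℝ≥0∞)) / ((∑ i, (n i : ℕ))! : ℝ≥0∞)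
      = ENNReal.ofReal (Real.exp 1) *
          ∑ i ∈ range (k + 1), (k.choose i : ℝ≥0∞) / (2 * k + 1 - i)! := by
  -- `mᵢ + 1` is written as `(1 + mᵢ).choose 1`, the case `a = 1` of
  -- `sum_antidiagonalTuple_prod_add_choose`.
  calc _ = ∑' m : Fin (k + 1) → ℕ,
          (∏ i, ((1 + m i).choose 1 : ℝ≥0∞)) / ((∑ i, m i) + (k + 1))! := by
        rw [← (Equiv.piCongrRight fun _ => Equiv.pnatEquivNat.symm).tsum_eq]
        simp [sum_add_distrib, add_comm]
    _ = ∑' N, ((2 * k + 1 + N).choose (2 * k + 1) : ℝ≥0∞) / (N + (k + 1))! := by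
        rw [tsum_eq_tsum_sum_antidiagonalTuple]
        refine tsum_congr fun N => ?_
        simp_rw [div_eq_mul_inv]
        rw [sum_congr rfl fun m hm => by rw [mem_antidiagonalTuple.1 hm], ← sum_mul]
        simp only [← Nat.cast_prod, ← Nat.cast_sum, sum_antidiagonalTuple_prod_add_choose]
        rw [show k * (1 + 1) + 1 = 2 * k + 1 by ring]
    _ = ∑' N, ∑ i ∈ range (k + 1), (k.choose i : ℝ≥0∞) *
          (((N + (k + 1)).choose (2 * k + 1 - i) : ℝ≥0∞) / (N + (k + 1))!) := by
        refine tsum_congr fun N => ?_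
        rw [show 2 * k + 1 + N = k + (N + (k + 1)) by ring,
          Nat.add_choose_eq_sum_range _ (by omega : k ≤ 2 * k + 1)]
        simp only [Nat.cast_sum, Nat.cast_mul, div_eq_mul_inv, sum_mul, mul_assoc]
    _ = _ := by
        rw [Summable.tsum_finsetSum fun i _ => ENNReal.summable, mul_sum]
        refine sum_congr rfl fun i hi => ?_
        rw [ENNReal.tsum_mul_left, tsum_add_choose_div_factorial (by simp at hi; omega),
          div_eq_mul_inv]
        ring

end ENNReal

theorem stmt_3 (k : ℕ) (hk : 1 ≤ k) :
    ∑' n : Fin k → ℕ+,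
        (∏ i, (n i : ℝ)) / (Nat.factorial (∑ i, (n i : ℕ)))
      = Real.exp 1 *
          ∑ i ∈ Finset.range k, (Nat.choose (k - 1) i : ℝ) / (Nat.factorial (2 * k - i - 1)) := by
  obtain ⟨k, rfl⟩ := Nat.exists_eq_add_of_le' hk
  have h := congrArg ENNReal.toReal (ENNReal.tsum_prod_div_factorial_sum k)
  rw [ENNReal.tsum_toReal_eq fun n => ENNReal.div_ne_top
      (ENNReal.prod_ne_top fun i _ => ENNReal.natCast_ne_top _) (by simp [factorial_ne_zero]),
    ENNReal.toReal_mul, ENNReal.toReal_sum fun i _ =>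
      ENNReal.div_ne_top (by simp) (by simp [factorial_ne_zero])] at h
  simp only [ENNReal.toReal_div, ENNReal.toReal_prod, ENNReal.toReal_natCast,
    ENNReal.toReal_ofReal (Real.exp_pos 1).le] at h
  rw [h, Nat.add_sub_cancel]
  congr 1
  refine sum_congr rfl fun i hi => ?_
  rw [show 2 * (k + 1) - i - 1 = 2 * k + 1 - i by omega]
end

section
/- For every positive integer k, the series ∑_{n₁=1}^∞ ⋯ ∑_{n_k=1}^∞ 1/(n₁+⋯+n_k)! equals (-1)^k (1 - e·∑_{j=0}^{k-1} (-1)^j / j!). -/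
/-!
Shifting every part down by one turns the series into `∑ 1 / (k + v₁ + ⋯ + vₖ)!` over `v ∈ ℕᵏ`, and
grouping the `v` by their sum `m` (there are `multichoose k m` of them) gives
`a k = ∑ₘ multichoose k m / (k + m)!`. Pascal's rule
`multichoose (k + 1) m + multichoose k (m + 1) = choose (k + m + 1) (m + 1)` gives
`a k + a (k + 1) = e / k!`, and the closed form follows by induction from `a 0 = 1`.
-/

open Finset

theorem Finset.Nat.card_antidiagonalTuple (k n : ℕ) :
    #(Nat.antidiagonalTuple k n) = k.multichoose n := by
  rw [← piAntidiag_univ_fin_eq_antidiagonalTuple, ← map_sym_eq_piAntidiag, card_map, sym_univ,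
    card_univ, Sym.card_sym_fin_eq_multichoose]

theorem hasSum_comp_sum_of_hasSum_multichoose_mul {k : ℕ} {g : ℕ → ℝ} {a : ℝ} (hg : ∀ m, 0 ≤ g m)
    (h : HasSum (fun m ↦ k.multichoose m * g m) a) :
    HasSum (fun v : Fin k → ℕ ↦ g (∑ i, v i)) a := by
  let e := Nat.sigmaAntidiagonalTupleEquivTuple k
  have hfiber (m : ℕ) :
      HasSum (fun v : Nat.antidiagonalTuple k m ↦ g (∑ i, e ⟨m, v⟩ i)) (k.multichoose m * g m) := by
    have hv (v : Nat.antidiagonalTuple k m) : g (∑ i, e ⟨m, v⟩ i) = g m :=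
      congrArg g (Nat.mem_antidiagonalTuple.mp v.2)
    simp only [hv]
    convert hasSum_fintype (fun _ : Nat.antidiagonalTuple k m ↦ g m) using 1
    simp [Nat.card_antidiagonalTuple]
  rw [← e.hasSum_iff]
  refine h.sigma_of_hasSum hfiber ?_
  exact (summable_sigma_of_nonneg fun _ ↦ hg _).mpr
    ⟨fun m ↦ (hfiber m).summable, h.summable.congr fun m ↦ (hfiber m).tsum_eq.symm⟩

theorem tsum_pnat_tuple_eq_tsum_nat_tuple {α : Type*} [AddCommMonoid α] [TopologicalSpace α]
    (k : ℕ) (f : ℕ → α) :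
    ∑' n : Fin k → ℕ+, f (∑ i, (n i : ℕ)) = ∑' v : Fin k → ℕ, f (k + ∑ i, v i) := by
  rw [← (Equiv.piCongrRight fun _ : Fin k ↦ Equiv.pnatEquivNat.symm).tsum_eq]
  congr! with v
  simp [Finset.sum_add_distrib, add_comm]

theorem Real.hasSum_inv_factorial_succ :
    HasSum (fun m : ℕ ↦ 1 / ((m + 1).factorial : ℝ)) (Real.exp 1 - 1) := by
  have h := NormedSpace.expSeries_div_hasSum_exp (1 : ℝ)
  rw [← Real.exp_eq_exp_ℝ, ← hasSum_nat_add_iff' 1] at h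
  simpa using h

theorem multichoose_add_multichoose_div_factorial (k m : ℕ) :
    ((k + 1).multichoose m : ℝ) / (k + 1 + m).factorial
      + k.multichoose (m + 1) / (k + (m + 1)).factorial
      = 1 / ((m + 1).factorial * k.factorial) := by
  have hpascal : (k + 1).multichoose m + k.multichoose (m + 1) = (k + m + 1).choose (m + 1) := by
    rw [add_comm, ← Nat.multichoose_succ_succ, Nat.multichoose_eq]
    congr 1
    omega
  have hfact : ((k + m + 1).choose (m + 1) * k.factorial * (m + 1).factorial : ℝ)
      = (k + m + 1).factorial := by
    exact_mod_cast Nat.add_choose_mul_factorial_mul_factorial k (m + 1)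
  have hchoose : ((k + m + 1).choose (m + 1) : ℝ) ≠ 0 := by
    exact_mod_cast (Nat.choose_pos (by omega)).ne'
  rw [show k + 1 + m = k + m + 1 by ring, show k + (m + 1) = k + m + 1 by ring, ← add_div,
    ← Nat.cast_add, hpascal, ← hfact]
  field_simp

theorem hasSum_multichoose_div_factorial (k : ℕ) :
    HasSum (fun m ↦ (k.multichoose m : ℝ) / (k + m).factorial)
      ((-1) ^ k * (1 - Real.exp 1 * ∑ j ∈ range k, (-1 : ℝ) ^ j / j.factorial)) := by
  induction k with
  | zero =>
    convert hasSum_ite_eq 0 (1 : ℝ) with m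
    · cases m <;> simp
    · simp
  | succ k ih =>
    have hshift := (hasSum_nat_add_iff' 1).mpr ih
    have hsplit := (Real.hasSum_inv_factorial_succ.div_const (k.factorial : ℝ)).sub hshift
    have hvalue : (-1) ^ (k + 1) * (1 - Real.exp 1 * ∑ j ∈ range (k + 1), (-1 : ℝ) ^ j / j.factorial)
        = (Real.exp 1 - 1) / k.factorial
          - ((-1) ^ k * (1 - Real.exp 1 * ∑ j ∈ range k, (-1 : ℝ) ^ j / j.factorial)
            - ∑ i ∈ range 1, (k.multichoose i : ℝ) / (k + i).factorial) := by
      have hsign : ((-1 : ℝ) ^ k) ^ 2 = 1 := by rw [← pow_mul, mul_comm, pow_mul]; norm_num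
      simp only [sum_range_succ, range_one, sum_singleton, Nat.multichoose_zero_right, add_zero]
      field_simp
      linear_combination Real.exp 1 * hsign
    rw [hvalue]
    refine hsplit.congr_fun fun m ↦ ?_
    rw [eq_sub_iff_add_eq, div_div, multichoose_add_multichoose_div_factorial]

theorem stmt_5_general (k : ℕ) :
    ∑' n : Fin k → ℕ+, (1 : ℝ) / (Nat.factorial (∑ i, (n i : ℕ)))
      = (-1) ^ k *
          (1 - Real.exp 1 * ∑ j ∈ Finset.range k, (-1 : ℝ) ^ j / (Nat.factorial j)) := by
  rw [tsum_pnat_tuple_eq_tsum_nat_tuple k fun m ↦ (1 : ℝ) / m.factorial]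
  refine (hasSum_comp_sum_of_hasSum_multichoose_mul (g := fun m ↦ 1 / (k + m).factorial)
    (fun m ↦ by positivity) ?_).tsum_eq
  simpa only [mul_one_div] using hasSum_multichoose_div_factorial k

theorem stmt_5 (k : ℕ) (hk : 1 ≤ k) :
    ∑' n : Fin k → ℕ+, (1 : ℝ) / (Nat.factorial (∑ i, (n i : ℕ)))
      = (-1) ^ k *
          (1 - Real.exp 1 * ∑ j ∈ Finset.range k, (-1 : ℝ) ^ j / (Nat.factorial j)) :=
  stmt_5_general k
end

section
/- For every positive integer k, the series ∑_{n₁=1}^∞ ⋯ ∑_{n_k=1}^∞ n₁/(n₁+⋯+n_k)! equals e/k!. -/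
/-!
Write `n i = m i + 1` and group the tuples `m : Fin k → ℕ` by `N = ∑ i, m i`. On the `N`-th
group, all coordinates have the same sum, so `∑ m 0 = N / k · C(N + k - 1, k - 1)` (stars and
bars), whence `∑ (m 0 + 1) = C(N + k, k)` and the group contributes `1 / (k! N!)`. Summing over
`N` gives `e / k!`; the regrouping is legitimate because all terms are nonnegative.
-/

open Finset Finset.Nat
open scoped Nat

theorem Finset.Nat.card_antidiagonalTuple_s6 (k n : ℕ) :
    #(antidiagonalTuple k n) = (k + n - 1).choose n := by
  rw [card_eq_of_equiv_fintype ((Equiv.subtypeEquivRight fun _ => mem_antidiagonalTuple).trans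
    (Sym.equivNatSumOfFintype (Fin k) n).symm), Sym.card_sym_eq_choose, Fintype.card_fin]

theorem Finset.Nat.sum_antidiagonalTuple_apply_comm (k n : ℕ) (i j : Fin k) :
    ∑ x ∈ antidiagonalTuple k n, x i = ∑ x ∈ antidiagonalTuple k n, x j := by
  have hmem : ∀ x : Fin k → ℕ,
      x ∈ antidiagonalTuple k n → x ∘ Equiv.swap i j ∈ antidiagonalTuple k n := by
    intro x hx
    rw [mem_antidiagonalTuple] at hx ⊢
    rw [← hx]
    exact Equiv.sum_comp (Equiv.swap i j) x
  refine sum_nbij' (· ∘ Equiv.swap i j) (· ∘ Equiv.swap i j) hmem hmem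
    (fun x _ => by ext; simp) (fun x _ => by ext; simp) (fun x _ => by simp)

theorem Finset.Nat.card_mul_sum_antidiagonalTuple_apply (k n : ℕ) (i : Fin k) :
    k * ∑ x ∈ antidiagonalTuple k n, x i = n * #(antidiagonalTuple k n) :=
  calc k * ∑ x ∈ antidiagonalTuple k n, x i
      = ∑ j : Fin k, ∑ x ∈ antidiagonalTuple k n, x j := by
        simp [sum_antidiagonalTuple_apply_comm k n _ i]
    _ = ∑ x ∈ antidiagonalTuple k n, ∑ j, x j := sum_comm
    _ = n * #(antidiagonalTuple k n) := by
        rw [sum_congr rfl fun x hx => mem_antidiagonalTuple.1 hx, sum_const, smul_eq_mul, mul_comm]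

theorem Finset.Nat.sum_antidiagonalTuple_apply_add_one (k n : ℕ) (i : Fin (k + 1)) :
    ∑ x ∈ antidiagonalTuple (k + 1) n, (x i + 1) = (n + (k + 1)).choose (k + 1) := by
  refine Nat.eq_of_mul_eq_mul_left (Nat.add_one_pos k) ?_
  have hcard : #(antidiagonalTuple (k + 1) n) = (n + k).choose k := by
    rw [card_antidiagonalTuple_s6, show k + 1 + n - 1 = n + k by omega, Nat.choose_symm_add]
  rw [sum_add_distrib, mul_add, card_mul_sum_antidiagonalTuple_apply, sum_const, smul_eq_mul,
    mul_one, hcard, ← add_mul, mul_comm (k + 1)]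
  exact Nat.add_one_mul_choose_eq (n + k) k

theorem Finset.Nat.sum_antidiagonalTuple_apply_add_one_div_factorial (k n : ℕ)
    (i : Fin (k + 1)) :
    ∑ x ∈ antidiagonalTuple (k + 1) n, ((x i : ℝ) + 1) / (n + (k + 1))! =
      1 / ((k + 1)! * n !) := by
  rw [← sum_div]
  rw_mod_cast [sum_antidiagonalTuple_apply_add_one]
  rw [Nat.cast_choose ℝ (Nat.le_add_left _ _), Nat.add_sub_cancel]
  push_cast
  field_simp

theorem Finset.Nat.hasSum_of_hasSum_antidiagonalTuple {k : ℕ} {f : (Fin k → ℕ) → ℝ}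
    {a : ℝ} (hf : 0 ≤ f) (h : HasSum (fun n => ∑ x ∈ antidiagonalTuple k n, f x) a) :
    HasSum f a := by
  rw [← (sigmaAntidiagonalTupleEquivTuple k).hasSum_iff]
  have hfiber (n : ℕ) : HasSum (fun x : antidiagonalTuple k n => f x)
      (∑ x ∈ antidiagonalTuple k n, f x) :=
    (antidiagonalTuple k n).hasSum f
  have hsummable : Summable (f ∘ sigmaAntidiagonalTupleEquivTuple k) :=
    (summable_sigma_of_nonneg fun _ => hf _).2
      ⟨fun n => (hfiber n).summable, h.summable.congr fun n => (hfiber n).tsum_eq.symm⟩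
  rw [h.unique (hsummable.hasSum.sigma hfiber)]
  exact hsummable.hasSum

theorem hasSum_pnat_tuple_iff {ι α : Type*} [AddCommMonoid α] [TopologicalSpace α]
    {f : (ι → ℕ+) → α} {a : α} :
    HasSum f a ↔ HasSum (fun m : ι → ℕ => f fun i => (m i).succPNat) a :=
  (Equiv.piCongrRight fun _ => Equiv.pnatEquivNat.symm).hasSum_iff.symm

theorem Real.hasSum_one_div_factorial_mul (k : ℕ) :
    HasSum (fun n : ℕ => 1 / ((k ! : ℝ) * n !)) (Real.exp 1 / k !) := by
  rw [Real.exp_eq_exp_ℝ]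
  simpa only [one_pow, div_div, mul_comm] using
    (NormedSpace.expSeries_div_hasSum_exp (1 : ℝ)).div_const (k ! : ℝ)

theorem stmt_6 (k : ℕ) (hk : 1 ≤ k) :
    ∑' n : Fin k → ℕ+,
        (n ⟨0, hk⟩ : ℝ) / (Nat.factorial (∑ i, (n i : ℕ)))
      = Real.exp 1 / (Nat.factorial k) := by
  obtain ⟨k, rfl⟩ := Nat.exists_eq_add_of_le' hk
  have hshifted : HasSum
      (fun m : Fin (k + 1) → ℕ => ((m ⟨0, hk⟩ : ℝ) + 1) / (∑ i, m i + (k + 1))!)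
      (Real.exp 1 / (k + 1)!) := by
    refine hasSum_of_hasSum_antidiagonalTuple (fun m => by positivity) ?_
    refine (Real.hasSum_one_div_factorial_mul (k + 1)).congr_fun fun n => ?_
    rw [← sum_antidiagonalTuple_apply_add_one_div_factorial k n ⟨0, hk⟩]
    exact sum_congr rfl fun m hm => by rw [mem_antidiagonalTuple.1 hm]
  refine (hasSum_pnat_tuple_iff.2 ?_).tsum_eq
  simpa [sum_add_distrib] using hshifted
end

section
/- For every positive integer k, ∑_{n₁=1}^∞ ⋯ ∑_{n_k=1}^∞ 1/(n₁+⋯+n_k)! = (1/(k-1)!) · f^{(k-1)}(1), where f(z) = (e^z - 1)/z (extended by f(0) = 1). -/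
/-- The entire function `f(z) = (e^z - 1)/z`, extended by `f(0) = 1`. -/
noncomputable def expm1Div (z : ℝ) : ℝ := if z = 0 then 1 else (Real.exp z - 1) / z

/-!
Shifting every `nᵢ` down by one and grouping the tuples by their sum (stars and bars), the
left-hand side becomes `∑ₘ C(m, k-1) / (m+1)!`. On the other side, differentiating
`z f(z) = e^z - 1` with Leibniz' rule gives `f⁽ʲ⁺¹⁾(1) + (j+1) f⁽ʲ⁾(1) = e`, so the Taylor
coefficients `cⱼ = f⁽ʲ⁾(1) / j!` satisfy `cⱼ₊₁ + cⱼ = e / (j+1)!` with `c₀ = e - 1`. The series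
`Sⱼ = ∑ₘ C(m, j) / (m+1)!` satisfies the same recursion by Pascal's rule, because
`∑ₘ C(m, i) / m! = e / i!`.
-/

open Finset Real
open scoped Nat ENNReal

theorem natCard_sum_eq_choose {ι : Type*} [Fintype ι] (m : ℕ) :
    Nat.card {p : ι → ℕ // ∑ i, p i = m} = (Fintype.card ι + m - 1).choose m := by
  classical
  rw [← Nat.card_eq_fintype_card, ← Sym.natCard_sym_eq_choose]
  exact Nat.card_congr (Sym.equivNatSumOfFintype ι m).symm

theorem ENNReal.tsum_comp_sum_eq_tsum_choose_mul {ι : Type*} [Fintype ι] (g : ℕ → ℝ≥0∞) :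
    ∑' p : ι → ℕ, g (∑ i, p i) = ∑' m, ((Fintype.card ι + m - 1).choose m : ℝ≥0∞) * g m := by
  classical
  rw [← ENNReal.tsum_fiberwise _ (fun p : ι → ℕ => ∑ i, p i)]
  refine tsum_congr fun m => ?_
  have : Finite {p : ι → ℕ // ∑ i, p i = m} := .of_equiv _ (Sym.equivNatSumOfFintype ι m)
  calc ∑' p : {p : ι → ℕ // ∑ i, p i = m}, g (∑ i, (p : ι → ℕ) i)
      = ∑' _ : {p : ι → ℕ // ∑ i, p i = m}, g m := tsum_congr fun p => by rw [p.2]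
    _ = _ := by rw [ENNReal.tsum_const, ENat.card_eq_coe_natCard, natCard_sum_eq_choose]; rfl

-- Going through `ℝ≥0∞` makes the regrouping valid without any summability hypothesis.
theorem tsum_comp_sum_eq_tsum_choose_mul {ι : Type*} [Fintype ι] {g : ℕ → ℝ}
    (hg : ∀ m, 0 ≤ g m) :
    ∑' p : ι → ℕ, g (∑ i, p i) = ∑' m, ((Fintype.card ι + m - 1).choose m : ℝ) * g m := by
  have h := congrArg ENNReal.toReal
    (ENNReal.tsum_comp_sum_eq_tsum_choose_mul (ι := ι) (fun m => ENNReal.ofReal (g m)))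
  rw [ENNReal.tsum_toReal_eq (fun _ => ENNReal.ofReal_ne_top),
    ENNReal.tsum_toReal_eq (fun _ => ENNReal.mul_ne_top (ENNReal.natCast_ne_top _)
      ENNReal.ofReal_ne_top)] at h
  simpa only [ENNReal.toReal_mul, ENNReal.toReal_natCast, ENNReal.toReal_ofReal (hg _)] using h

theorem tsum_pnat_pi_comp_sum {ι : Type*} [Fintype ι] (g : ℕ → ℝ) :
    ∑' n : ι → ℕ+, g (∑ i, (n i : ℕ)) = ∑' p : ι → ℕ, g (∑ i, p i + Fintype.card ι) := by
  rw [← (Equiv.piCongrRight fun _ : ι => Equiv.pnatEquivNat.symm).tsum_eq]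
  simp [Finset.sum_add_distrib]

theorem tsum_nat_eq_tsum_add_of_lt {M : Type*} [AddCommMonoid M] [TopologicalSpace M]
    {f : ℕ → M} (i : ℕ) (hf : ∀ m < i, f m = 0) : ∑' m, f m = ∑' n, f (n + i) := by
  refine ((add_left_injective i).tsum_eq fun m hm => ?_).symm
  exact ⟨m - i, Nat.sub_add_cancel (not_lt.1 fun h => hm (hf m h))⟩

theorem Real.hasSum_one_div_factorial : HasSum (fun n : ℕ => 1 / (n ! : ℝ)) (exp 1) := by
  simpa [Real.exp_eq_exp_ℝ] using NormedSpace.expSeries_div_hasSum_exp (1 : ℝ)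

theorem summable_choose_div_factorial (i : ℕ) :
    Summable fun m : ℕ => (m.choose i : ℝ) / m ! := by
  refine (Real.summable_pow_div_factorial 2).of_nonneg_of_le (fun m => by positivity) fun m => ?_
  gcongr
  exact_mod_cast Nat.choose_le_two_pow m i

theorem tsum_choose_div_factorial (i : ℕ) :
    ∑' m : ℕ, (m.choose i : ℝ) / m ! = exp 1 / i ! := by
  rw [tsum_nat_eq_tsum_add_of_lt i fun m hm => by simp [Nat.choose_eq_zero_of_lt hm]]
  calc ∑' n : ℕ, ((n + i).choose i : ℝ) / (n + i)! = ∑' n : ℕ, 1 / (i ! : ℝ) * (1 / n !) := by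
        refine tsum_congr fun n => ?_
        rw [← Nat.add_choose_mul_factorial_mul_factorial n i]
        have : ((n + i).choose i : ℝ) ≠ 0 := by exact_mod_cast (Nat.choose_pos (by omega)).ne'
        push_cast
        field_simp
    _ = exp 1 / i ! := by rw [tsum_mul_left, Real.hasSum_one_div_factorial.tsum_eq]; ring

theorem tsum_one_div_factorial_succ : ∑' m : ℕ, 1 / ((m + 1)! : ℝ) = exp 1 - 1 := by
  have h := tsum_choose_div_factorial 0
  rw [(summable_choose_div_factorial 0).tsum_eq_zero_add] at h
  simp only [Nat.choose_zero_right, Nat.factorial_zero, Nat.cast_one, div_one] at h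
  linarith

theorem tsum_choose_succ_add_tsum_choose (j : ℕ) :
    ∑' m : ℕ, (m.choose (j + 1) : ℝ) / (m + 1)! + ∑' m : ℕ, (m.choose j : ℝ) / (m + 1)!
      = exp 1 / (j + 1)! := by
  have hs : ∀ i, Summable fun m : ℕ => (m.choose i : ℝ) / (m + 1)! := fun i =>
    ((summable_nat_add_iff 1).2 (summable_choose_div_factorial i)).of_nonneg_of_le
      (fun m => by positivity) fun m => by gcongr; omega
  rw [← Summable.tsum_add (hs _) (hs _), ← tsum_choose_div_factorial,
    (summable_choose_div_factorial _).tsum_eq_zero_add]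
  simp only [Nat.choose_zero_succ, Nat.cast_zero, zero_div, zero_add, Nat.choose_succ_succ',
    Nat.cast_add, add_div, add_comm]

theorem mul_expm1Div (x : ℝ) : x * expm1Div x = exp x - 1 := by
  rcases eq_or_ne x 0 with rfl | hx
  · simp
  · rw [expm1Div, if_neg hx, mul_div_cancel₀ _ hx]

theorem contDiffAt_expm1Div {x : ℝ} (hx : x ≠ 0) {n : WithTop ℕ∞} :
    ContDiffAt ℝ n expm1Div x := by
  have h : ContDiffAt ℝ n (fun y => (exp y - 1) / y) x := by fun_prop (disch := exact hx)
  refine h.congr_of_eventuallyEq ?_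
  filter_upwards [eventually_ne_nhds hx] with y hy using if_neg hy

theorem mul_iteratedDeriv_succ_expm1Div_add {x : ℝ} (hx : x ≠ 0) (j : ℕ) :
    x * iteratedDeriv (j + 1) expm1Div x + (j + 1) * iteratedDeriv j expm1Div x = exp x := by
  have hexp : iteratedDeriv (j + 1) (fun y => exp y - 1) x = exp x := by
    rw [iteratedDeriv_succ']
    simp [iteratedDeriv_eq_iterate, Real.iter_deriv_exp]
  rw [← hexp, ← funext mul_expm1Div,
    iteratedDeriv_fun_mul (f := fun y => y) contDiffAt_fun_id (contDiffAt_expm1Div hx),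
    sum_range_succ', sum_range_succ', sum_eq_zero fun i _ => by simp [iteratedDeriv_fun_id]]
  simp [iteratedDeriv_fun_id]
  ring

theorem iteratedDeriv_expm1Div_one_succ_div_add (j : ℕ) :
    iteratedDeriv (j + 1) expm1Div 1 / (j + 1)! + iteratedDeriv j expm1Div 1 / j !
      = exp 1 / (j + 1)! := by
  have h := mul_iteratedDeriv_succ_expm1Div_add one_ne_zero j
  rw [Nat.factorial_succ]
  push_cast
  field_simp
  linarith

theorem iteratedDeriv_expm1Div_one_div_factorial (j : ℕ) :
    iteratedDeriv j expm1Div 1 / j ! = ∑' m : ℕ, (m.choose j : ℝ) / (m + 1)! := by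
  induction j with
  | zero => simpa [expm1Div] using tsum_one_div_factorial_succ.symm
  | succ j ih =>
    linarith [iteratedDeriv_expm1Div_one_succ_div_add j, tsum_choose_succ_add_tsum_choose j]

theorem stmt_7 (k : ℕ) (hk : 1 ≤ k) :
    ∑' n : Fin k → ℕ+, (1 : ℝ) / (Nat.factorial (∑ i, (n i : ℕ)))
      = (1 / (Nat.factorial (k - 1))) * iteratedDeriv (k - 1) expm1Div 1 := by
  obtain ⟨j, rfl⟩ : ∃ j, k = j + 1 := ⟨k - 1, by omega⟩
  rw [Nat.add_sub_cancel, one_div_mul_eq_div, iteratedDeriv_expm1Div_one_div_factorial]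
  calc ∑' n : Fin (j + 1) → ℕ+, (1 : ℝ) / (∑ i, (n i : ℕ))!
      = ∑' p : Fin (j + 1) → ℕ, 1 / ((∑ i, p i + (j + 1))! : ℝ) := by
        simpa using tsum_pnat_pi_comp_sum (ι := Fin (j + 1)) fun N => 1 / (N ! : ℝ)
    _ = ∑' m : ℕ, ((m + j).choose j : ℝ) / (m + j + 1)! := by
        rw [tsum_comp_sum_eq_tsum_choose_mul (g := fun N => 1 / ((N + (j + 1))! : ℝ))
          fun _ => by positivity]
        refine tsum_congr fun m => ?_
        rw [Fintype.card_fin, show j + 1 + m - 1 = m + j by omega, Nat.choose_symm_add,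
          mul_one_div, ← add_assoc]
    _ = ∑' m : ℕ, (m.choose j : ℝ) / (m + 1)! :=
        (tsum_nat_eq_tsum_add_of_lt j (f := fun m => (m.choose j : ℝ) / (m + 1)!)
          fun m hm => by simp [Nat.choose_eq_zero_of_lt hm]).symm
end

section
/- For integers 1 ≤ j ≤ k, the series S_{k,j} := ∑_{n₁=1}^∞ ⋯ ∑_{n_k=1}^∞ (n₁⋯n_j)/(n₁+⋯+n_k)! equals (1/(k+j-1)!) times the (k+j-1)-st derivative of z ↦ z^{j-1} e^z evaluated at z = 1. -/
/-!
Grouping the terms by `N = n₁ + ⋯ + n_k`, the total weight `n₁⋯n_j` of the compositions of `N`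
into `k` positive parts is the coefficient of `X^N` in `(X/(1-X)²)^j (X/(1-X))^(k-j) =
X^k/(1-X)^(k+j)`, namely `C(N+j-1, k+j-1)`; so the series is `∑_N C(N+j-1, k+j-1)/N!`.
On the other side, by Leibniz' rule and the Chu–Vandermonde identity for falling factorials,
the `m`-th derivative of `z^a e^z` at `1` is `∑_N (a+N)_m/N!`, which is `z^a e^z = ∑_N z^(a+N)/N!`
differentiated termwise; with `(a+N)_m = m! C(a+N, m)` the two sides agree.
-/

open scoped ENNReal Nat

namespace PowerSeries

lemma map_mk_one {R S : Type*} [CommSemiring R] [CommSemiring S] (f : R →+* S) :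
    map f (mk 1) = mk 1 := by
  ext; simp

lemma coeff_mk_one_pow {R : Type*} [CommSemiring R] (d n : ℕ) :
    coeff n ((mk 1 : R⟦X⟧) ^ d) = d.multichoose n := by
  cases d with
  | zero => cases n <;> simp [coeff_one]
  | succ d =>
    have hZ := coeff_map (Nat.castRingHom ℤ) n ((mk 1 : ℕ⟦X⟧) ^ (d + 1))
    rw [map_pow, map_mk_one, mk_one_pow_eq_mk_choose_add, coeff_mk, eq_natCast] at hZ
    have hR := coeff_map (Nat.castRingHom R) n ((mk 1 : ℕ⟦X⟧) ^ (d + 1))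
    rw [map_pow, map_mk_one, eq_natCast] at hR
    rw [hR, Nat.multichoose_eq, show d + 1 + n - 1 = d + n by omega, ← Nat.choose_symm_add]
    exact congrArg Nat.cast (Nat.cast_injective (R := ℤ) hZ.symm)

end PowerSeries

open PowerSeries
open Finset hiding mk

lemma ENNReal.tsum_prod_eq_tsum_sum_antidiagonal {A : Type*} [AddCommMonoid A]
    [HasAntidiagonal A] (F : A × A → ℝ≥0∞) :
    ∑' x, F x = ∑' n, ∑ x ∈ antidiagonal n, F x := by
  rw [← HasAntidiagonal.sigmaAntidiagonalEquivProd.tsum_eq, ENNReal.tsum_sigma']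
  exact tsum_congr fun n => tsum_subtype (antidiagonal n) F

lemma ENNReal.tsum_tsum_coeff_mul_coeff (p q : ℝ≥0∞⟦X⟧) (g : ℕ → ℝ≥0∞) :
    ∑' (a : ℕ) (b : ℕ), coeff a p * coeff b q * g (a + b) = ∑' n, coeff n (p * q) * g n := by
  rw [← ENNReal.tsum_prod, ENNReal.tsum_prod_eq_tsum_sum_antidiagonal]
  refine tsum_congr fun n => ?_
  rw [coeff_mul, sum_mul]
  refine sum_congr rfl fun x hx => ?_
  rw [mem_antidiagonal.mp hx]

lemma ENNReal.tsum_prod_coeff_mul (k : ℕ) (f : Fin k → ℝ≥0∞⟦X⟧) (g : ℕ → ℝ≥0∞) :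
    ∑' m : Fin k → ℕ, (∏ i, coeff (m i) (f i)) * g (∑ i, m i) =
      ∑' n, coeff n (∏ i, f i) * g n := by
  induction k generalizing g with
  | zero => simp [coeff_one]
  | succ k ih =>
    rw [← (Fin.consEquiv fun _ => ℕ).tsum_eq, ENNReal.tsum_prod', Fin.prod_univ_succ,
      ← ENNReal.tsum_tsum_coeff_mul_coeff]
    refine tsum_congr fun a => ?_
    simp only [Fin.consEquiv_apply, Fin.prod_univ_succ, Fin.sum_univ_succ, Fin.cons_zero,
      Fin.cons_succ, mul_assoc, ENNReal.tsum_mul_left]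
    rw [ih (fun i => f i.succ) (fun b => g (a + b))]

lemma Fin.sum_ite_val_lt (k j : ℕ) (hjk : j ≤ k) :
    ∑ i : Fin k, (if (i : ℕ) < j then 2 else 1) = k + j := by
  rw [sum_ite, Finset.sum_const, Finset.sum_const, Fin.card_filter_val_lt,
    filter_not, card_sdiff_of_subset (filter_subset _ _), Fin.card_filter_val_lt]
  simp only [card_univ, Fintype.card_fin, smul_eq_mul]
  omega

/-- After the substitution `n = m + 1`, the weight `n` is the coefficient of `X^m` in
`(1 - X)⁻² = (mk 1)²` and the weight `1` that of `X^m` in `(1 - X)⁻¹ = mk 1`. -/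
lemma ENNReal.tsum_pnat_prod_mul (k j : ℕ) (hjk : j ≤ k) (g : ℕ → ℝ≥0∞) :
    ∑' n : Fin k → ℕ+, (∏ i ∈ Finset.univ.filter (fun i : Fin k => (i : ℕ) < j), (n i : ℝ≥0∞)) *
        g (∑ i, (n i : ℕ)) =
      ∑' M, ((k + j).multichoose M : ℝ≥0∞) * g (M + k) := by
  let f : Fin k → ℝ≥0∞⟦X⟧ := fun i => mk 1 ^ (if (i : ℕ) < j then 2 else 1)
  have hf : ∏ i, f i = mk 1 ^ (k + j) := by
    rw [prod_pow_eq_pow_sum, Fin.sum_ite_val_lt k j hjk]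
  simp_rw [← coeff_mk_one_pow, ← hf]
  rw [← ENNReal.tsum_prod_coeff_mul k f (fun M => g (M + k)),
    ← (Equiv.piCongrRight fun _ => Equiv.pnatEquivNat).symm.tsum_eq]
  refine tsum_congr fun m => ?_
  simp only [Equiv.piCongrRight_symm_apply, Equiv.pnatEquivNat_symm_apply, Pi.map_apply,
    Nat.succPNat_coe, Nat.succ_eq_add_one, prod_filter, sum_add_distrib, Finset.sum_const,
    card_univ, Fintype.card_fin, smul_eq_mul, mul_one]
  congr 1
  refine prod_congr rfl fun i _ => ?_
  simp only [f, coeff_mk_one_pow]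
  split_ifs <;> simp [Nat.multichoose_two, Nat.multichoose_one]

lemma Real.hasSum_descFactorial_div_factorial (r : ℕ) :
    HasSum (fun n : ℕ => (n.descFactorial r : ℝ) / n !) (Real.exp 1) := by
  rw [← hasSum_nat_add_iff' r]
  have hvanish : ∑ n ∈ range r, (n.descFactorial r : ℝ) / n ! = 0 :=
    sum_eq_zero fun n hn => by
      rw [Nat.descFactorial_eq_zero_iff_lt.mpr (mem_range.mp hn), Nat.cast_zero, zero_div]
  have hshift (n : ℕ) : ((n + r).descFactorial r : ℝ) / (n + r)! = 1 ^ n / n ! := by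
    rw [← Nat.factorial_mul_descFactorial (Nat.le_add_left r n), Nat.add_sub_cancel, one_pow,
      Nat.cast_mul]
    field_simp
  simpa only [hvanish, hshift, sub_zero, Real.exp_eq_exp_ℝ] using
    NormedSpace.expSeries_div_hasSum_exp (1 : ℝ)

lemma Real.hasSum_add_descFactorial_div_factorial (a m : ℕ) :
    HasSum (fun n : ℕ => ((a + n).descFactorial m : ℝ) / n !)
      (∑ ij ∈ antidiagonal m, m.choose ij.1 * a.descFactorial ij.1 * Real.exp 1) := by
  have hvandermonde (n : ℕ) : ((a + n).descFactorial m : ℝ) =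
      ∑ ij ∈ antidiagonal m, (m.choose ij.1 : ℝ) * a.descFactorial ij.1 * n.descFactorial ij.2 := by
    rw [← Polynomial.descPochhammer_smeval_eq_descFactorial, Nat.cast_add,
      Ring.descPochhammer_smeval_add m (Nat.cast_commute a (n : ℝ))]
    simp only [Polynomial.descPochhammer_smeval_eq_descFactorial, mul_assoc]
  simp_rw [hvandermonde, sum_div, mul_div_assoc]
  exact hasSum_sum fun ij _ => (Real.hasSum_descFactorial_div_factorial ij.2).mul_left _

lemma iteratedDeriv_pow_mul_exp (a m : ℕ) (x : ℝ) :
    iteratedDeriv m (fun z => z ^ a * Real.exp z) x =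
      ∑ i ∈ range (m + 1), m.choose i * a.descFactorial i * x ^ (a - i) * Real.exp x := by
  rw [iteratedDeriv_fun_mul (contDiff_fun_id.pow a).contDiffAt Real.contDiff_exp.contDiffAt]
  simp only [iteratedDeriv_pow, iteratedDeriv_eq_iterate, Real.iter_deriv_exp, mul_assoc]

lemma iteratedDeriv_pow_mul_exp_one (a m : ℕ) :
    iteratedDeriv m (fun z => z ^ a * Real.exp z) 1 =
      ∑' n : ℕ, ((a + n).descFactorial m : ℝ) / n ! := by
  rw [(Real.hasSum_add_descFactorial_div_factorial a m).tsum_eq, iteratedDeriv_pow_mul_exp,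
    Nat.sum_antidiagonal_eq_sum_range_succ (fun i _ => m.choose i * a.descFactorial i * Real.exp 1)]
  simp only [one_pow, mul_one]

lemma tsum_pnat_prod_div_factorial (k j : ℕ) (hj : 1 ≤ j) (hjk : j ≤ k) :
    ∑' n : Fin k → ℕ+, (∏ i ∈ Finset.univ.filter (fun i : Fin k => (i : ℕ) < j), (n i : ℝ)) /
        (∑ i, (n i : ℕ))! =
      ∑' n : ℕ, ((j - 1 + n).choose (k + j - 1) : ℝ) / n ! := by
  have hcount := ENNReal.tsum_pnat_prod_mul k j hjk fun n => ((n ! : ℝ≥0∞))⁻¹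
  have hshift : ∑' n, ((k + j).multichoose n : ℝ≥0∞) * ((n + k)! : ℝ≥0∞)⁻¹ =
      ∑' n, ((j - 1 + n).choose (k + j - 1) : ℝ≥0∞) * (n ! : ℝ≥0∞)⁻¹ := by
    symm
    rw [← ENNReal.summable.sum_add_tsum_nat_add' (k := k), sum_eq_zero, zero_add]
    · refine tsum_congr fun n => ?_
      rw [Nat.multichoose_eq, show j - 1 + (n + k) = k + j + n - 1 by omega,
        Nat.choose_symm_of_eq_add (show k + j + n - 1 = k + j - 1 + n by omega)]
    · intro n hn
      rw [Nat.choose_eq_zero_of_lt (by simp at hn; omega), Nat.cast_zero, zero_mul]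
  have hfinite (x : ℝ≥0∞) (n : ℕ) (hx : x ≠ ⊤) : x * (n ! : ℝ≥0∞)⁻¹ ≠ ⊤ :=
    ENNReal.mul_ne_top hx (ENNReal.inv_ne_top.mpr (by positivity))
  have := congrArg ENNReal.toReal (hcount.trans hshift)
  rw [ENNReal.tsum_toReal_eq fun n =>
      hfinite _ _ (ENNReal.prod_ne_top fun i _ => ENNReal.natCast_ne_top _),
    ENNReal.tsum_toReal_eq fun n => hfinite _ _ (ENNReal.natCast_ne_top _)] at this
  simpa [div_eq_mul_inv] using this

theorem stmt_8 (k j : ℕ) (hj : 1 ≤ j) (hjk : j ≤ k) :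
    ∑' n : Fin k → ℕ+,
        (∏ i ∈ Finset.univ.filter (fun i : Fin k => (i : ℕ) < j), (n i : ℝ)) /
          (Nat.factorial (∑ i, (n i : ℕ)))
      = (1 / (Nat.factorial (k + j - 1))) *
          iteratedDeriv (k + j - 1) (fun z : ℝ => z ^ (j - 1) * Real.exp z) 1 := by
  rw [tsum_pnat_prod_div_factorial k j hj hjk, iteratedDeriv_pow_mul_exp_one, ← tsum_mul_left]
  refine tsum_congr fun n => ?_
  rw [Nat.descFactorial_eq_factorial_mul_choose, Nat.cast_mul]
  field_simp
end

section
/- (Popoviciu) For pairwise distinct real numbers x₀, …, x_k and every nonnegative integer r, the divided difference of the monomial z ↦ z^{k+r} at the nodes x₀, …, x_k equals ∑ x₀^{n₀} ⋯ x_k^{n_k}, where the sum runs over all tuples of nonnegative integers (n₀, …, n_k) with n₀ + ⋯ + n_k = r. -/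
/-!
Removing the node `x₀`, the Leibniz rule `[x₀,…,x_k; z g] = x₀ [x₀,…,x_k; g] + [x₁,…,x_k; g]`
for divided differences matches the recursion `h_{r+1}(x₀,…,x_k) = x₀ h_r(x₀,…,x_k) + h_{r+1}(x₁,…,x_k)`
of the complete homogeneous sums `h_r`. This settles the theorem by induction on `k` and `r`,
from the base cases of a single node and of `r = 0`; for the latter, `[x₀,…,x_k; z^k] = 1` is the
leading coefficient of the interpolation polynomial of `z^k`, that is, of `z^k` itself.
-/

/-- Divided difference of `f` at the nodes `x 0, …, x (k-1)` (Lagrange form, which agrees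
with the usual recursive definition when the nodes are pairwise distinct). -/
noncomputable def divDiff {k : ℕ} (x : Fin k → ℝ) (f : ℝ → ℝ) : ℝ :=
  ∑ i, f (x i) / ∏ j ∈ Finset.univ.erase i, (x i - x j)

open Finset Polynomial

section DividedDifference

variable {F ι : Type*} [Field F] [DecidableEq ι]

def divDiffOn (s : Finset ι) (v : ι → F) (f : F → F) : F :=
  ∑ i ∈ s, f (v i) / ∏ j ∈ s.erase i, (v i - v j)

theorem divDiffOn_map {κ : Type*} [DecidableEq κ] (s : Finset κ) (e : κ ↪ ι) (v : ι → F)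
    (f : F → F) : divDiffOn (s.map e) v f = divDiffOn s (v ∘ e) f := by
  simp only [divDiffOn, sum_map, ← map_erase, prod_map, Function.comp_apply]

theorem divDiffOn_pow_eq_one {s : Finset ι} {v : ι → F} (hv : Set.InjOn v s) {n : ℕ}
    (hs : #s = n + 1) : divDiffOn s v (· ^ n) = 1 := by
  have hdeg : (X ^ n : F[X]).degree < #s := by
    rw [degree_X_pow, hs]; exact_mod_cast n.lt_succ_self
  simpa [divDiffOn, hs] using (Lagrange.coeff_eq_sum hv hdeg).symm

theorem divDiffOn_id_mul {s : Finset ι} {v : ι → F} (hv : Set.InjOn v s) {l : ι} (hl : l ∈ s)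
    (g : F → F) :
    divDiffOn s v (fun z => z * g z) = v l * divDiffOn s v g + divDiffOn (s.erase l) v g := by
  suffices divDiffOn s v (fun z => z * g z) - v l * divDiffOn s v g = divDiffOn (s.erase l) v g by
    linear_combination this
  rw [divDiffOn, divDiffOn, mul_sum, ← sum_sub_distrib, ← sum_erase_add _ _ hl]
  simp only [mul_div_assoc, sub_self, add_zero]
  refine sum_congr rfl fun i hi => ?_
  have hil : i ≠ l := ne_of_mem_erase hi
  have hi : i ∈ s := mem_of_mem_erase hi
  have hsub : ∀ j ∈ s, j ≠ i → v i - v j ≠ 0 := fun j hj hji =>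
    sub_ne_zero.mpr fun h => hji (hv hj hi h.symm)
  have hprod : ∏ j ∈ (s.erase l).erase i, (v i - v j) ≠ 0 :=
    prod_ne_zero_iff.mpr fun j hj =>
      hsub j (mem_of_mem_erase (mem_of_mem_erase hj)) (ne_of_mem_erase hj)
  rw [← mul_prod_erase (s.erase i) _ (mem_erase.mpr ⟨hil.symm, hl⟩), erase_right_comm]
  field_simp [hsub l hl hil.symm]

end DividedDifference

theorem divDiff_eq_divDiffOn {k : ℕ} (x : Fin k → ℝ) (f : ℝ → ℝ) :
    divDiff x f = divDiffOn univ x f := rfl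

theorem divDiff_tail {k : ℕ} (x : Fin (k + 1) → ℝ) (f : ℝ → ℝ) :
    divDiff (Fin.tail x) f = divDiffOn (univ.erase 0) x f := by
  have hnodes : (univ : Finset (Fin (k + 1))).erase 0 = univ.map (Fin.succEmb k) := by
    ext i; cases i using Fin.cases <;> simp
  rw [hnodes, divDiffOn_map]
  rfl

theorem divDiff_id_mul {k : ℕ} (x : Fin (k + 1) → ℝ) (hx : Function.Injective x) (g : ℝ → ℝ) :
    divDiff x (fun z => z * g z) = x 0 * divDiff x g + divDiff (Fin.tail x) g := by
  rw [divDiff_tail]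
  exact divDiffOn_id_mul hx.injOn (mem_univ 0) g

theorem divDiff_fin_one (x : Fin 1 → ℝ) (f : ℝ → ℝ) : divDiff x f = f (x 0) := by
  simp [divDiff]

section CompleteHomogeneous

variable {R : Type*} [CommSemiring R]

def completeHomogeneous (r : ℕ) {k : ℕ} (x : Fin k → R) : R :=
  ∑ n ∈ Nat.antidiagonalTuple k r, ∏ i, x i ^ n i

theorem completeHomogeneous_zero {k : ℕ} (x : Fin k → R) : completeHomogeneous 0 x = 1 := by
  simp [completeHomogeneous, Nat.antidiagonalTuple_zero_right]

theorem completeHomogeneous_fin_one (r : ℕ) (x : Fin 1 → R) :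
    completeHomogeneous r x = x 0 ^ r := by
  simp [completeHomogeneous, Nat.antidiagonalTuple_one]

theorem completeHomogeneous_cons (r : ℕ) {k : ℕ} (a : R) (x : Fin k → R) :
    completeHomogeneous r (Fin.cons a x : Fin (k + 1) → R)
      = ∑ p ∈ antidiagonal r, a ^ p.1 * completeHomogeneous p.2 x := by
  simp only [completeHomogeneous, mul_sum]
  rw [sum_sigma']
  refine sum_nbij' (fun n : Fin (k + 1) → ℕ => ⟨(n 0, ∑ i, Fin.tail n i), Fin.tail n⟩) (fun p => Fin.cons p.1.1 p.2)
    ?_ ?_ ?_ ?_ ?_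
  · intro n hn
    simp only [Nat.mem_antidiagonalTuple, mem_sigma, HasAntidiagonal.mem_antidiagonal] at hn ⊢
    exact ⟨by rw [← hn, Fin.sum_univ_succ]; rfl, trivial⟩
  · rintro ⟨⟨a, b⟩, m⟩ hp
    simp only [mem_sigma, HasAntidiagonal.mem_antidiagonal,
      Nat.mem_antidiagonalTuple] at hp ⊢
    rw [Fin.sum_cons, hp.2, hp.1]
  · intro n _
    simp
  · rintro ⟨⟨a, b⟩, m⟩ hp
    simp only [mem_sigma, HasAntidiagonal.mem_antidiagonal,
      Nat.mem_antidiagonalTuple] at hp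
    simp [hp.2]
  · intro n _
    simp [Fin.prod_univ_succ, Fin.tail]

theorem completeHomogeneous_succ (r : ℕ) {k : ℕ} (x : Fin (k + 1) → R) :
    completeHomogeneous (r + 1) x
      = x 0 * completeHomogeneous r x + completeHomogeneous (r + 1) (Fin.tail x) := by
  conv_lhs => rw [← Fin.cons_self_tail x, completeHomogeneous_cons]
  conv_rhs => rw [← Fin.cons_self_tail x, completeHomogeneous_cons]
  rw [Nat.sum_antidiagonal_succ, mul_sum]
  simp only [pow_zero, one_mul, pow_succ, Fin.cons_zero, Fin.tail_cons, mul_assoc, mul_left_comm _ (x 0)]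
  rw [add_comm]

end CompleteHomogeneous

theorem divDiff_pow_add_eq_completeHomogeneous (k r : ℕ) (x : Fin (k + 1) → ℝ)
    (hx : Function.Injective x) : divDiff x (· ^ (k + r)) = completeHomogeneous r x := by
  induction k generalizing r with
  | zero => simp [divDiff_fin_one, completeHomogeneous_fin_one]
  | succ k ihk =>
    induction r with
    | zero =>
      rw [completeHomogeneous_zero, add_zero, divDiff_eq_divDiffOn]
      exact divDiffOn_pow_eq_one hx.injOn (by simp)
    | succ r ihr =>
      have htail := ihk (r + 1) (Fin.tail x) (hx.comp (Fin.succ_injective _))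
      calc divDiff x (· ^ (k + 1 + (r + 1)))
          = divDiff x (fun z => z * z ^ (k + 1 + r)) := by
            congr 1; funext z; ring
        _ = x 0 * divDiff x (· ^ (k + 1 + r)) + divDiff (Fin.tail x) (· ^ (k + (r + 1))) := by
          rw [divDiff_id_mul x hx, show k + 1 + r = k + (r + 1) by omega]
        _ = completeHomogeneous (r + 1) x := by rw [ihr, htail, completeHomogeneous_succ r x]

theorem stmt_9 (k r : ℕ) (x : Fin (k + 1) → ℝ) (hx : Function.Injective x) :
    divDiff x (fun z => z ^ (k + r))
      = ∑ n ∈ Finset.Nat.antidiagonalTuple (k + 1) r, ∏ i, x i ^ n i :=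
  divDiff_pow_add_eq_completeHomogeneous k r x hx
end

section
/- Let g(z) = ∑_{n=0}^∞ g_n z^n converge for |z| < R with R > 1, let ℓ ≥ 0 be an integer, and set g_ℓ(z) = ∑_{n=0}^∞ g_{n+ℓ} z^n. Then for pairwise distinct real numbers x₁, …, x_k with |x_i| < R, the multiple series ∑_{n₁=0}^∞ ⋯ ∑_{n_k=0}^∞ g_{n₁+⋯+n_k+ℓ} · x₁^{n₁}⋯x_k^{n_k} equals the divided difference [x₁,…,x_k; z^{k-1} g_ℓ(z)]. -/
open Finset

section Lagrange

open Polynomial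

variable {k : ℕ} {x : Fin k → ℝ}

theorem sum_pow_div_mul_prod_sub (hk : 1 ≤ k) (hx : Function.Injective x) (s : ℝ) :
    ∑ i, x i ^ (k - 1) / (∏ j ∈ univ.erase i, (x i - x j)) * ∏ j ∈ univ.erase i, (s - x j)
      = s ^ (k - 1) := by
  have hdeg : (X ^ (k - 1) : ℝ[X]).degree < #(univ : Finset (Fin k)) := by
    rw [degree_X_pow, card_univ, Fintype.card_fin]
    exact_mod_cast Nat.sub_lt hk one_pos
  have h := congrArg (eval s) (Lagrange.eq_interpolate hx.injOn hdeg)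
  simp only [Lagrange.interpolate_apply, eval_finsetSum, eval_pow, eval_X, eval_mul, eval_C,
    Lagrange.basis, eval_prod, Lagrange.basisDivisor, eval_sub] at h
  rw [h]
  refine sum_congr rfl fun i _ => ?_
  rw [prod_mul_distrib, prod_inv_distrib, div_eq_mul_inv]
  ring

/-- The previous identity at `s⁻¹`, multiplied by `s ^ (k - 1)`. -/
theorem sum_pow_div_mul_prod_one_sub (hk : 1 ≤ k) (hx : Function.Injective x) :
    ∑ i, C (x i ^ (k - 1) / ∏ j ∈ univ.erase i, (x i - x j)) *
      ∏ j ∈ univ.erase i, (1 - C (x j) * X) = (1 : ℝ[X]) := by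
  refine eq_of_infinite_eval_eq _ _ ((Set.finite_singleton 0).infinite_compl.mono fun s hs => ?_)
  have hs : s ≠ 0 := hs
  have hprod (i : Fin k) : ∏ j ∈ univ.erase i, (1 - x j * s)
      = s ^ (k - 1) * ∏ j ∈ univ.erase i, (s⁻¹ - x j) := by
    have hcard : #(univ.erase i) = k - 1 := by simp
    rw [← hcard, ← prod_const, ← prod_mul_distrib]
    exact prod_congr rfl fun j _ => by field_simp
  simp only [Set.mem_ofPred_eq, eval_finsetSum, eval_mul, eval_C, eval_prod, eval_sub, eval_one,
    eval_X, hprod, mul_left_comm _ (s ^ (k - 1)), ← mul_sum, sum_pow_div_mul_prod_sub hk hx,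
    ← mul_pow, mul_inv_cancel₀ hs, one_pow]

end Lagrange

namespace PowerSeries

theorem rescale_mk_one_mul_one_sub {R : Type*} [CommRing R] (a : R) :
    rescale a (mk 1) * (1 - C a * X) = 1 := by
  rw [← rescale_X, ← map_one (rescale a), ← map_sub, ← map_mul, mk_one_mul_one_sub_eq_one, map_one]

theorem coeff_prod_eq_sum_piAntidiag {R ι : Type*} [CommSemiring R] [Fintype ι] [DecidableEq ι]
    (f : ι → R⟦X⟧) (d : ℕ) :
    coeff d (∏ i, f i) = ∑ n ∈ piAntidiag univ d, ∏ i, coeff (n i) (f i) :=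
  (coeff_prod f d univ).trans (sum_equiv Finsupp.equivFunOnFinite (by simp) fun _ _ => rfl)

end PowerSeries

section PartialFractions

open PowerSeries

variable {k : ℕ} {x : Fin k → ℝ}

/-- Partial fractions for `∏ i, 1 / (1 - x i * X)`: `rescale a (mk 1)` is the power series of
`1 / (1 - a * X)`. -/
theorem prod_rescale_mk_one_eq_sum (hk : 1 ≤ k) (hx : Function.Injective x) :
    ∏ i, rescale (x i) (mk 1) =
      ∑ i, C (x i ^ (k - 1) / ∏ j ∈ univ.erase i, (x i - x j)) * rescale (x i) (mk 1) := by
  have hpoly := congrArg (Polynomial.coeToPowerSeries.ringHom (R := ℝ))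
    (sum_pow_div_mul_prod_one_sub hk hx)
  simp only [map_sum, map_prod, map_mul, map_sub, map_one,
    Polynomial.coeToPowerSeries.ringHom_apply, Polynomial.coe_C, Polynomial.coe_X] at hpoly
  refine left_inv_eq_right_inv (a := ∏ i, (1 - C (x i) * X)) ?_ ?_
  · rw [← prod_mul_distrib]
    exact prod_eq_one fun i _ => rescale_mk_one_mul_one_sub (x i)
  · rw [mul_sum]
    refine (sum_congr rfl fun i _ => ?_).trans hpoly
    rw [← mul_prod_erase univ _ (mem_univ i)]
    linear_combination (C (x i ^ (k - 1) / ∏ j ∈ univ.erase i, (x i - x j)) *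
      ∏ j ∈ univ.erase i, (1 - C (x j) * X)) * rescale_mk_one_mul_one_sub (x i)

theorem sum_piAntidiag_prod_pow_eq_divDiff (hk : 1 ≤ k) (hx : Function.Injective x) (N : ℕ) :
    ∑ n ∈ piAntidiag univ N, ∏ i, x i ^ n i = divDiff x (· ^ (N + (k - 1))) := by
  have h := congrArg (coeff N) (prod_rescale_mk_one_eq_sum hk hx)
  rw [coeff_prod_eq_sum_piAntidiag] at h
  simp only [map_sum, coeff_C_mul, coeff_rescale, coeff_mk, Pi.one_apply, mul_one] at h
  rw [h, divDiff]
  exact sum_congr rfl fun i _ => by ring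

end PartialFractions

theorem summable_prod_pow_of_lt_one {ι : Type*} [Fintype ι] {y : ι → ℝ}
    (h0 : ∀ i, 0 ≤ y i) (h1 : ∀ i, y i < 1) : Summable fun n : ι → ℕ => ∏ i, y i ^ n i := by
  classical
  refine summable_of_sum_le (c := ∏ i, (1 - y i)⁻¹)
    (fun n => prod_nonneg fun i _ => pow_nonneg (h0 i) _) fun u => ?_
  calc ∑ n ∈ u, ∏ i, y i ^ n i
      ≤ ∑ n ∈ Fintype.piFinset fun i => u.image (· i), ∏ i, y i ^ n i :=
        sum_le_sum_of_subset_of_nonneg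
          (fun n hn => Fintype.mem_piFinset.2 fun i => mem_image_of_mem _ hn)
          fun n _ _ => prod_nonneg fun i _ => pow_nonneg (h0 i) _
    _ = ∏ i, ∑ m ∈ u.image (· i), y i ^ m := (prod_univ_sum _ _).symm
    _ ≤ ∏ i, (1 - y i)⁻¹ := by
        refine prod_le_prod (fun i _ => sum_nonneg fun m _ => pow_nonneg (h0 i) m) fun i _ => ?_
        rw [← tsum_geometric_of_lt_one (h0 i) (h1 i)]
        exact (summable_geometric_of_lt_one (h0 i) (h1 i)).sum_le_tsum _
          fun m _ => pow_nonneg (h0 i) m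

section Coefficients

variable {g : ℕ → ℝ} {r : ℝ}

theorem abs_mul_pow_le_tsum (hg : Summable fun n => g n * r ^ n) (hr : 0 < r) (m : ℕ) :
    |g m| * r ^ m ≤ ∑' n, |g n * r ^ n| := by
  rw [← abs_of_pos (pow_pos hr m), ← abs_mul]
  exact hg.abs.le_tsum m fun _ _ => abs_nonneg _

theorem summable_mul_prod_pow {ι : Type*} [Fintype ι]
    (hg : Summable fun n => g n * r ^ n) (hr : 0 < r) (ℓ : ℕ) {x : ι → ℝ}
    (hx : ∀ i, |x i| < r) : Summable fun n : ι → ℕ => g (∑ i, n i + ℓ) * ∏ i, x i ^ n i := by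
  refine .of_norm_bounded (((summable_prod_pow_of_lt_one (fun i => by positivity)
    fun i => (div_lt_one hr).2 (hx i))).mul_left ((∑' n, |g n * r ^ n|) / r ^ ℓ)) fun n => ?_
  have hsplit : ‖g (∑ i, n i + ℓ) * ∏ i, x i ^ n i‖
      = |g (∑ i, n i + ℓ)| * r ^ (∑ i, n i + ℓ) / r ^ ℓ * ∏ i, (|x i| / r) ^ n i := by
    rw [Real.norm_eq_abs, abs_mul, abs_prod, pow_add]
    simp only [abs_pow, div_pow, prod_div_distrib, prod_pow_eq_pow_sum]
    field_simp
  rw [hsplit]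
  gcongr
  exact abs_mul_pow_le_tsum hg hr _

theorem summable_mul_pow_add (hg : Summable fun n => g n * r ^ n) (hr : 0 < r) (ℓ : ℕ) {z : ℝ}
    (hz : |z| < r) : Summable fun n => g (n + ℓ) * z ^ n := by
  simpa [Function.comp_def, uniqueElim_const] using (Equiv.funUnique Unit ℕ).symm.summable_iff.2
    (summable_mul_prod_pow hg hr ℓ (x := fun _ : Unit => z) fun _ => hz)

end Coefficients

theorem HasSum.sum_piAntidiag {ι α : Type*} [Fintype ι] [DecidableEq ι] [AddCommGroup α]
    [UniformSpace α] [IsUniformAddGroup α] [CompleteSpace α] [T2Space α]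
    {f : (ι → ℕ) → α} {a : α} (hf : HasSum f a) :
    HasSum (fun N => ∑ n ∈ piAntidiag univ N, f n) a := by
  convert hf.tsum_fiberwise fun n => ∑ i, n i with N
  rw [← Finset.tsum_subtype']
  exact tsum_congr_set_coe f (by ext; simp)

theorem divDiff_const_mul {k : ℕ} (x : Fin k → ℝ) (c : ℝ) (f : ℝ → ℝ) :
    divDiff x (fun z => c * f z) = c * divDiff x f := by
  simp only [divDiff, mul_sum, mul_div_assoc]

theorem hasSum_divDiff {k : ℕ} (x : Fin k → ℝ) {f : ℕ → ℝ → ℝ} {F : ℝ → ℝ}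
    (hf : ∀ i, HasSum (fun n => f n (x i)) (F (x i))) :
    HasSum (fun n => divDiff x (f n)) (divDiff x F) :=
  hasSum_sum fun i _ => (hf i).div_const _

theorem exists_pos_forall_abs_lt_lt {ι : Type*} [Finite ι] [Nonempty ι] {x : ι → ℝ} {R : ℝ}
    (hx : ∀ i, |x i| < R) : ∃ r, 0 < r ∧ r < R ∧ ∀ i, |x i| < r := by
  obtain ⟨i₀, hi₀⟩ := Finite.exists_max fun i => |x i|
  obtain ⟨r, hxr, hrR⟩ := exists_between (hx i₀)
  exact ⟨r, (abs_nonneg _).trans_lt hxr, hrR, fun i => (hi₀ i).trans_lt hxr⟩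

theorem stmt_12_general (g : ℕ → ℝ) (R : ℝ)
    (hconv : ∀ z : ℝ, |z| < R → Summable (fun n : ℕ => g n * z ^ n))
    (ℓ : ℕ) (k : ℕ) (hk : 1 ≤ k)
    (x : Fin k → ℝ) (hx : Function.Injective x) (hxR : ∀ i, |x i| < R) :
    ∑' n : Fin k → ℕ, g (∑ i, n i + ℓ) * ∏ i, x i ^ n i
      = divDiff x (fun z => z ^ (k - 1) * ∑' n : ℕ, g (n + ℓ) * z ^ n) := by
  have : NeZero k := ⟨by omega⟩
  obtain ⟨r, hr, hrR, hxr⟩ := exists_pos_forall_abs_lt_lt hxR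
  have hg := hconv r (by rwa [abs_of_pos hr])
  have hlhs := (summable_mul_prod_pow hg hr ℓ hxr).hasSum.sum_piAntidiag
  have hrhs : HasSum (fun N => divDiff x fun z => g (N + ℓ) * z ^ (N + (k - 1)))
      (divDiff x fun z => z ^ (k - 1) * ∑' n, g (n + ℓ) * z ^ n) :=
    hasSum_divDiff x fun i =>
      ((summable_mul_pow_add hg hr ℓ (hxr i)).hasSum.mul_left (x i ^ (k - 1))).congr_fun
        fun N => by ring
  refine hlhs.tsum_eq.symm.trans (tsum_congr fun N => ?_) |>.trans hrhs.tsum_eq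
  rw [divDiff_const_mul, ← sum_piAntidiag_prod_pow_eq_divDiff hk hx, mul_sum]
  refine sum_congr rfl fun n hn => ?_
  rw [(mem_piAntidiag.1 hn).1]

theorem stmt_12 (g : ℕ → ℝ) (R : ℝ) (hR : 1 < R)
    (hconv : ∀ z : ℝ, |z| < R → Summable (fun n : ℕ => g n * z ^ n))
    (ℓ : ℕ) (k : ℕ) (hk : 1 ≤ k)
    (x : Fin k → ℝ) (hx : Function.Injective x) (hxR : ∀ i, |x i| < R) :
    ∑' n : Fin k → ℕ, g (∑ i, n i + ℓ) * ∏ i, x i ^ n i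
      = divDiff x (fun z => z ^ (k - 1) * ∑' n : ℕ, g (n + ℓ) * z ^ n) :=
  stmt_12_general g R hconv ℓ k hk x hx hxR
end
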